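/- For all integers m ≥ 3 and n ≥ 3, the signed Roman domination number of Cₘ ∨ Cₙ satisfies 1 ≤ γ_sR(Cₘ ∨ Cₙ) ≤ 4. -/

import Mathlib

open Finset SimpleGraph
open scoped Classical

/-- The sum of `f` over the closed neighborhood of `v` in `G`. -/
noncomputable def closedNbrSum {V : Type*} [Fintype V] (G : SimpleGraph V)
    (f : V → ℤ) (v : V) : ℤ :=
  ∑ u ∈ Finset.univ.filter (fun u => u = v ∨ G.Adj v u), f u

/-- `f` is a signed Roman dominating function on `G`. -/
def IsSRDF {V : Type*} [Fintype V] (G : SimpleGraph V) (f : V → ℤ) : Prop :=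
  (∀ v, f v = -1 ∨ f v = 1 ∨ f v = 2) ∧
  (∀ v, 1 ≤ closedNbrSum G f v) ∧
  (∀ v, f v = -1 → ∃ u, G.Adj v u ∧ f u = 2)

/-- The signed Roman domination number of `G`. -/
noncomputable def gammaSR {V : Type*} [Fintype V] (G : SimpleGraph V) : ℤ :=
  sInf {w : ℤ | ∃ f, IsSRDF G f ∧ w = ∑ v, f v}

/-- The join of two graphs. -/
def graphJoin {V W : Type*} (G : SimpleGraph V) (H : SimpleGraph W) :
    SimpleGraph (V ⊕ W) where
  Adj x y :=
    match x, y with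
    | .inl a, .inl b => G.Adj a b
    | .inr a, .inr b => H.Adj a b
    | _, _ => True
  symm := by
    constructor
    rintro (a | a) (b | b) h <;> simp_all <;> exact h.symm
  loopless := by
    constructor
    rintro (a | a) h <;> simp_all

/-! Let `A` and `B` be the weights of `f` on the two cycles. Summing `f[N[x]] ≥ 1` over the
vertices of `Cₘ` counts every label of `Cₘ` three times and every label of `Cₙ` `m` times, so
`3A + mB ≥ m`, and likewise `3B + nA ≥ n`. If `A + B ≤ 0`, then one of them, say `B`, is `≤ 0`,
and `m ≤ 3A + mB ≤ (m - 3)B ≤ 0`, which is absurd. The same count works for any join of two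
nonempty regular graphs.

For the upper bound, label each cycle with a pattern of weight `2` containing a `2` whose closed
neighbourhood sums are at least `-1`. In the join every closed neighbourhood then sums to at least
`-1 + 2`, every `-1` is adjacent to the `2` on the other cycle, and the weight is `4`. -/

variable {V W : Type*} [Fintype V] [Fintype W]

lemma gammaSR_le_sum_of_isSRDF {G : SimpleGraph V} {f : V → ℤ} (hf : IsSRDF G f) :
    gammaSR G ≤ ∑ v, f v := by
  refine csInf_le ⟨-Fintype.card V, ?_⟩ ⟨f, hf, rfl⟩
  rintro _ ⟨g, hg, rfl⟩
  calc -(Fintype.card V : ℤ) = ∑ _v : V, -1 := by simp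
    _ ≤ ∑ v, g v := sum_le_sum fun v _ => by rcases hg.1 v with h | h | h <;> omega

lemma le_gammaSR {G : SimpleGraph V} {a : ℤ} (h : ∃ f, IsSRDF G f)
    (ha : ∀ f, IsSRDF G f → a ≤ ∑ v, f v) : a ≤ gammaSR G := by
  obtain ⟨f, hf⟩ := h
  refine le_csInf ⟨_, f, hf, rfl⟩ ?_
  rintro _ ⟨g, hg, rfl⟩
  exact ha g hg

section ClosedNbrSum

variable (G : SimpleGraph V)

lemma closedNbrSum_eq_add_sum_neighborFinset (f : V → ℤ) (v : V) [Fintype (G.neighborSet v)] :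
    closedNbrSum G f v = f v + ∑ u ∈ G.neighborFinset v, f u := by
  have hN : univ.filter (fun u => u = v ∨ G.Adj v u) = insert v (G.neighborFinset v) := by
    ext u; simp
  rw [closedNbrSum, hN, sum_insert (by simp)]

lemma sum_closedNbrSum [DecidableRel G.Adj] (f : V → ℤ) :
    ∑ v, closedNbrSum G f v = ∑ u, (G.degree u + 1 : ℤ) * f u := by
  have hswap : ∑ v, ∑ u ∈ G.neighborFinset v, f u = ∑ u, ∑ _v ∈ G.neighborFinset u, f u :=
    sum_comm' fun v u => by simp [G.adj_comm]
  simp only [closedNbrSum_eq_add_sum_neighborFinset, sum_add_distrib, hswap, sum_const,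
    card_neighborFinset_eq_degree, nsmul_eq_mul, add_mul, one_mul, add_comm]

variable {G}

lemma sum_closedNbrSum_of_isRegularOfDegree [DecidableRel G.Adj] {r : ℕ}
    (hG : G.IsRegularOfDegree r) (f : V → ℤ) :
    ∑ v, closedNbrSum G f v = (r + 1) * ∑ v, f v := by
  simp [sum_closedNbrSum, hG.degree_eq, mul_sum]

end ClosedNbrSum

section Join

variable (G : SimpleGraph V) (H : SimpleGraph W)

lemma closedNbrSum_graphJoin_inl (f : V ⊕ W → ℤ) (v : V) :
    closedNbrSum (graphJoin G H) f (.inl v) =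
      closedNbrSum G (f ∘ .inl) v + ∑ w, f (.inr w) := by
  simp only [closedNbrSum, sum_filter, Fintype.sum_sum_type]
  congr 1 <;> refine sum_congr rfl fun _ _ => ?_ <;> simp [graphJoin]

lemma closedNbrSum_graphJoin_inr (f : V ⊕ W → ℤ) (w : W) :
    closedNbrSum (graphJoin G H) f (.inr w) =
      closedNbrSum H (f ∘ .inr) w + ∑ v, f (.inl v) := by
  simp only [closedNbrSum, sum_filter, Fintype.sum_sum_type, add_comm (∑ v : V, _)]
  congr 1 <;> refine sum_congr rfl fun _ _ => ?_ <;> simp [graphJoin]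

end Join

lemma add_pos_of_le_mul_add_mul {a b c p : ℤ} (hb : b ≤ 0) (hc : 0 < c) (hcp : c ≤ p)
    (h : p ≤ c * a + p * b) : 0 < a + b := by
  nlinarith

lemma card_le_of_forall_one_le_closedNbrSum_add {G : SimpleGraph V} [DecidableRel G.Adj] {r : ℕ}
    (hG : G.IsRegularOfDegree r) {f : V → ℤ} {c : ℤ} (h : ∀ v, 1 ≤ closedNbrSum G f v + c) :
    (Fintype.card V : ℤ) ≤ (r + 1) * ∑ v, f v + Fintype.card V * c := by
  calc (Fintype.card V : ℤ) = ∑ _v : V, 1 := by simp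
    _ ≤ ∑ v, (closedNbrSum G f v + c) := sum_le_sum fun v _ => h v
    _ = (r + 1) * ∑ v, f v + Fintype.card V * c := by
      rw [sum_add_distrib, sum_closedNbrSum_of_isRegularOfDegree hG]; simp

lemma SimpleGraph.IsRegularOfDegree.succ_le_card {G : SimpleGraph V} [DecidableRel G.Adj]
    [Nonempty V] {r : ℕ} (hG : G.IsRegularOfDegree r) : r + 1 ≤ Fintype.card V := by
  obtain ⟨v⟩ := ‹Nonempty V›
  simpa [hG.degree_eq] using G.degree_lt_card_verts v

theorem one_le_sum_of_forall_one_le_closedNbrSum_graphJoin [Nonempty V] [Nonempty W]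
    {G : SimpleGraph V} {H : SimpleGraph W} [DecidableRel G.Adj] [DecidableRel H.Adj] {r s : ℕ}
    (hG : G.IsRegularOfDegree r) (hH : H.IsRegularOfDegree s) {f : V ⊕ W → ℤ}
    (hf : ∀ x, 1 ≤ closedNbrSum (graphJoin G H) f x) : 1 ≤ ∑ x, f x := by
  have hV := card_le_of_forall_one_le_closedNbrSum_add hG
    fun v => (closedNbrSum_graphJoin_inl G H f v).symm ▸ hf (.inl v)
  have hW := card_le_of_forall_one_le_closedNbrSum_add hH
    fun w => (closedNbrSum_graphJoin_inr G H f w).symm ▸ hf (.inr w)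
  have hr : (r : ℤ) + 1 ≤ Fintype.card V := by exact_mod_cast hG.succ_le_card
  have hs : (s : ℤ) + 1 ≤ Fintype.card W := by exact_mod_cast hH.succ_le_card
  rw [Fintype.sum_sum_type]
  rcases le_or_gt (∑ w, f (.inr w)) 0 with hB | hB
  · exact add_pos_of_le_mul_add_mul hB (by positivity) hr hV
  rcases le_or_gt (∑ v, f (.inl v)) 0 with hA | hA
  · rw [add_comm]
    exact add_pos_of_le_mul_add_mul hA (by positivity) hs hW
  · omega

theorem isSRDF_graphJoin_sumElim {G : SimpleGraph V} {H : SimpleGraph W} {f : V → ℤ} {g : W → ℤ}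
    (hf : ∀ v, f v = -1 ∨ f v = 1 ∨ f v = 2) (hg : ∀ w, g w = -1 ∨ g w = 1 ∨ g w = 2)
    (hf₂ : ∃ v, f v = 2) (hg₂ : ∃ w, g w = 2)
    (hfG : ∀ v, 1 ≤ closedNbrSum G f v + ∑ w, g w)
    (hgH : ∀ w, 1 ≤ closedNbrSum H g w + ∑ v, f v) :
    IsSRDF (graphJoin G H) (Sum.elim f g) := by
  obtain ⟨v₂, hv₂⟩ := hf₂
  obtain ⟨w₂, hw₂⟩ := hg₂
  refine ⟨fun x => ?_, fun x => ?_, fun x _ => ?_⟩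
  · cases x <;> simp [hf, hg]
  · cases x
    · simpa [closedNbrSum_graphJoin_inl] using hfG _
    · simpa [closedNbrSum_graphJoin_inr] using hgH _
  · cases x
    · exact ⟨.inr w₂, trivial, hw₂⟩
    · exact ⟨.inl v₂, trivial, hv₂⟩

lemma cycleGraph_isRegularOfDegree_two (k : ℕ) : (cycleGraph (k + 3)).IsRegularOfDegree 2 :=
  fun _ => cycleGraph_degree_three_le

lemma closedNbrSum_cycleGraph {k : ℕ} (f : Fin (k + 3) → ℤ) (v : Fin (k + 3)) :
    closedNbrSum (cycleGraph (k + 3)) f v = f (v - 1) + f v + f (v + 1) := by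
  have hne : v - 1 ≠ v + 1 := by
    intro h
    have := congrArg Fin.val h
    rw [Fin.coe_sub_one, Fin.val_add_one] at this
    split_ifs at this <;> simp only [Fin.ext_iff, Fin.val_zero, Fin.val_last] at * <;> omega
  have hN : (cycleGraph (k + 3)).neighborFinset v = {v - 1, v + 1} :=
    cycleGraph_neighborFinset
  rw [closedNbrSum_eq_add_sum_neighborFinset, hN, sum_pair hne]
  ring

/-- The labels `2, -1, 1, -1, …, -1, 1` for odd `m` and `2, -1, 2, -1, 1, -1, …, 1, -1` for
even `m` have weight `2`, and any three cyclically consecutive ones sum to at least `-1`. -/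
def cyclePattern (m j : ℕ) : ℤ :=
  if j = 0 then 2 else if m % 2 = 0 ∧ j = 2 then 2 else if j % 2 = 1 then -1 else 1

lemma cyclePattern_mem (m j : ℕ) :
    cyclePattern m j = -1 ∨ cyclePattern m j = 1 ∨ cyclePattern m j = 2 := by
  unfold cyclePattern; split_ifs <;> simp

lemma sum_range_cyclePattern {m : ℕ} (hm : 3 ≤ m) : ∑ j ∈ range m, cyclePattern m j = 2 := by
  induction m using Nat.strong_induction_on with
  | _ m ih =>
    obtain hm | hm : m < 5 ∨ 5 ≤ m := lt_or_ge m 5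
    · interval_cases m <;> decide
    obtain ⟨p, rfl⟩ : ∃ p, m = p + 2 := ⟨m - 2, by omega⟩
    have hparity : ∀ j, cyclePattern (p + 2) j = cyclePattern p j := by
      simp [cyclePattern, Nat.add_mod_right]
    have htail : cyclePattern p p + cyclePattern p (p + 1) = 0 := by
      unfold cyclePattern; split_ifs <;> (try contradiction) <;> omega
    simp only [sum_range_succ, hparity, ih p (by omega) (by omega)]
    omega

lemma sum_cyclePattern (k : ℕ) : ∑ i : Fin (k + 3), cyclePattern (k + 3) i = 2 := by
  rw [Fin.sum_univ_eq_sum_range]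
  exact sum_range_cyclePattern (by omega)

lemma neg_one_le_closedNbrSum_cyclePattern (k : ℕ) (v : Fin (k + 3)) :
    -1 ≤ closedNbrSum (cycleGraph (k + 3)) (fun i => cyclePattern (k + 3) i) v := by
  have := v.isLt
  simp only [closedNbrSum_cycleGraph, Fin.coe_sub_one, Fin.val_add_one, Fin.ext_iff, Fin.val_zero,
    Fin.val_last]
  unfold cyclePattern
  split_ifs <;> omega

theorem exists_isSRDF_graphJoin_cycleGraph_sum_eq_four (k l : ℕ) :
    ∃ f, IsSRDF (graphJoin (cycleGraph (k + 3)) (cycleGraph (l + 3))) f ∧ ∑ x, f x = 4 := by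
  refine ⟨Sum.elim (fun i => cyclePattern (k + 3) i) (fun i => cyclePattern (l + 3) i), ?_, ?_⟩
  · refine isSRDF_graphJoin_sumElim (fun _ => cyclePattern_mem _ _) (fun _ => cyclePattern_mem _ _)
      ⟨0, by simp [cyclePattern]⟩ ⟨0, by simp [cyclePattern]⟩ (fun v => ?_) (fun w => ?_)
    · linarith [neg_one_le_closedNbrSum_cyclePattern k v, sum_cyclePattern l]
    · linarith [neg_one_le_closedNbrSum_cyclePattern l w, sum_cyclePattern k]
  · simp [Fintype.sum_sum_type, sum_cyclePattern]

theorem stmt4 (m n : ℕ) (hm : 3 ≤ m) (hn : 3 ≤ n) :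
    1 ≤ gammaSR (graphJoin (cycleGraph m) (cycleGraph n)) ∧
    gammaSR (graphJoin (cycleGraph m) (cycleGraph n)) ≤ 4 := by
  obtain ⟨k, rfl⟩ : ∃ k, m = k + 3 := ⟨m - 3, by omega⟩
  obtain ⟨l, rfl⟩ : ∃ l, n = l + 3 := ⟨n - 3, by omega⟩
  obtain ⟨f, hf, hf_sum⟩ := exists_isSRDF_graphJoin_cycleGraph_sum_eq_four k l
  refine ⟨le_gammaSR ⟨f, hf⟩ fun g hg => ?_, hf_sum ▸ gammaSR_le_sum_of_isSRDF hf⟩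
  exact one_le_sum_of_forall_one_le_closedNbrSum_graphJoin (cycleGraph_isRegularOfDegree_two k)
    (cycleGraph_isRegularOfDegree_two l) hg.2.1
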